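/- arXiv:1207.2628 — 2 statements merged into one kernel-verified Lean document; each statement's English description precedes it below -/
import Mathlib

section
/- Let p be a prime and d = 2p. A polynomial f ∈ P_d is post-critically bounded if and only if every critical point c of f satisfies |c| ≤ 1. -/
/-!
Write `f' = 2p ∏ (X - c)` over the critical points `c`; Vieta gives
`k a_k = ± 2p e_{2p-k}(c)` for the coefficients `a_k` of `f`, and `|k| ≥ |p|` for `0 < k < 2p`.
If all `|c| ≤ 1`, then all `|a_k| ≤ 1` and the closed unit disc is forward invariant.

Conversely, let `γ > 1` be the largest `|c|`. Then `|a_k| ≤ γ^(2p-k)`, with an extra factor `|p|`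
unless `k = p`, so `|f z| = |z|^(2p)` for `|z| > γ` and bounded critical orbits force `|f c| ≤ γ`.
For `|c| = γ` this reads `|c^p + a_p| < γ^p`; hence `|a_p| = γ^p`, `|2| = 1` and `p` is odd.
Since `|y^p - 1| < 1` implies `|y - 1| < 1` in residue characteristic `p`, each product of `p`
critical points of absolute value `γ` is close to `-a_p`, while the other products are small.
So `a_p = -2 e_p` is close to `2N a_p` with `N = (m choose p)`, `m < 2p`; but `N ≡ m / p ∈ {0, 1}`
modulo `p`, so `|1 - 2N| = 1`, a contradiction.
-/

open Polynomial IsUltrametricDist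

namespace Multiset

lemma norm_prod_le_pow_card {K : Type*} [NormedField K] {s : Multiset K} {γ : ℝ}
    (hs : ∀ c ∈ s, ‖c‖ ≤ γ) : ‖s.prod‖ ≤ γ ^ card s :=
  (map_multiset_prod (normHom : K →*₀ ℝ) s).trans_le
    (prod_map_le_pow_card (fun x _ => norm_nonneg x) hs)

lemma norm_prod_lt_pow_card {K : Type*} [NormedField K] {s : Multiset K} {γ : ℝ}
    (hs : ∀ c ∈ s, ‖c‖ ≤ γ) {c₀ : K} (hc₀ : c₀ ∈ s) (hlt : ‖c₀‖ < γ) :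
    ‖s.prod‖ < γ ^ card s := by
  obtain ⟨t, rfl⟩ := exists_cons_of_mem hc₀
  have hγ : 0 < γ := (norm_nonneg c₀).trans_lt hlt
  rw [prod_cons, norm_mul, card_cons, pow_succ']
  exact mul_lt_mul_of_lt_of_le_of_nonneg_of_pos hlt
    (norm_prod_le_pow_card fun c hc => hs c (mem_cons_of_mem hc)) (norm_nonneg _)
    (by positivity)

lemma filter_powersetCard {α : Type*} (q : α → Prop) [DecidablePred q]
    (s : Multiset α) (n : ℕ) :
    (powersetCard n s).filter (fun t => ∀ x ∈ t, q x) = powersetCard n (s.filter q) := by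
  induction s using Multiset.induction generalizing n with
  | empty => cases n <;> simp [powersetCard_zero_left, powersetCard_zero_right]
  | cons a s ih =>
    cases n with
    | zero => simp [powersetCard_zero_left]
    | succ n =>
      rw [powersetCard_cons, filter_add, filter_map, ih]
      by_cases ha : q a
      · rw [filter_cons_of_pos _ ha, powersetCard_cons, ← ih n]
        congr 2
        refine filter_congr fun t _ => ?_
        simp [ha]
      · rw [filter_cons_of_neg _ ha, add_eq_left, map_eq_zero, filter_eq_nil]
        exact fun t _ h => ha (h a (mem_cons_self a t))

end Multiset

namespace Nat

lemma choose_prime_modEq_div {p : ℕ} [Fact p.Prime] (m : ℕ) : m.choose p ≡ m / p [MOD p] := by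
  have hp := (Fact.out : p.Prime)
  simpa [Nat.mod_self, Nat.div_self hp.pos] using
    Choose.choose_modEq_choose_mod_mul_choose_div_nat (n := m) (k := p) (p := p)

lemma not_dvd_one_sub_two_mul_choose {p : ℕ} (hp : p.Prime) {m : ℕ} (hm : m < 2 * p) :
    ¬ (p : ℤ) ∣ 1 - 2 * (m.choose p : ℤ) := by
  have := Fact.mk hp
  rw [← ZMod.intCast_zmod_eq_zero_iff_dvd]
  push_cast
  rw [(ZMod.natCast_eq_natCast_iff _ _ _).mpr (Nat.choose_prime_modEq_div m)]
  have : m / p < 2 := Nat.div_lt_of_lt_mul (by linarith)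
  interval_cases m / p <;> norm_num

end Nat

lemma natCast_mul_coeff_eq_esymm_roots_derivative {F : Type*} [Field F] [CharZero F] {f : F[X]}
    (hf : f.Monic) (hsplit : f.derivative.Splits) {k : ℕ} (hk : k ≠ 0) (hkd : k ≤ f.natDegree) :
    (k : F) * f.coeff k = f.natDegree * (-1) ^ (f.natDegree - k) *
      f.derivative.roots.esymm (f.natDegree - k) := by
  obtain ⟨j, rfl⟩ := Nat.exists_eq_succ_of_ne_zero hk
  have := coeff_eq_esymm_roots_of_splits hsplit (k := j) (by rw [natDegree_derivative]; omega)
  rw [coeff_derivative, leadingCoeff_derivative, natDegree_derivative, hf.leadingCoeff,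
    Nat.sub_sub, add_comm 1 j] at this
  push_cast
  linear_combination this

lemma norm_le_of_bounded_orbit {α : Type*} [Norm α] {g : α → α} {R B : ℝ} (hR : 1 ≤ R)
    (hg : ∀ w, R < ‖w‖ → ‖w‖ ^ 2 ≤ ‖g w‖) {z : α} (hB : ∀ n, ‖g^[n] z‖ ≤ B) : ‖z‖ ≤ R := by
  by_contra! hz
  have hz1 : 1 < ‖z‖ := hR.trans_lt hz
  have hgrow : ∀ n, ‖z‖ ^ (n + 1) ≤ ‖g^[n] z‖ := by
    intro n
    induction n with
    | zero => simp
    | succ n ih =>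
      have hzn : ‖z‖ ≤ ‖g^[n] z‖ := (le_self_pow₀ hz1.le n.succ_ne_zero).trans ih
      rw [Function.iterate_succ_apply', pow_succ]
      calc ‖z‖ ^ (n + 1) * ‖z‖ ≤ ‖g^[n] z‖ ^ 2 := by
            rw [sq]; exact mul_le_mul ih hzn (by linarith) (by linarith)
        _ ≤ ‖g (g^[n] z)‖ := hg _ (hz.trans_le hzn)
  obtain ⟨n, hn⟩ := pow_unbounded_of_one_lt B hz1
  exact (hn.trans_le ((pow_le_pow_right₀ hz1.le n.le_succ).trans (hgrow n))).not_ge (hB n)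

section Ultrametric

variable {K : Type*} [NormedField K] [IsUltrametricDist K]

namespace IsUltrametricDist

lemma norm_multiset_sum_le_of_forall_le_of_nonneg {ι : Type*} {s : Multiset ι} {g : ι → K} {B : ℝ}
    (hB : 0 ≤ B) (h : ∀ i ∈ s, ‖g i‖ ≤ B) : ‖(s.map g).sum‖ ≤ B := by
  rcases eq_or_ne s 0 with rfl | hs
  · simpa using hB
  have : Nonempty ι := ⟨(Multiset.exists_mem_of_ne_zero hs).choose⟩
  obtain ⟨i, hi, hle⟩ := exists_norm_multiset_sum_le s (f := g)
  exact hle.trans (h i (hi hs))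

lemma norm_multiset_sum_lt_of_forall_lt {ι : Type*} {s : Multiset ι} {g : ι → K} {B : ℝ}
    (hB : 0 < B) (h : ∀ i ∈ s, ‖g i‖ < B) : ‖(s.map g).sum‖ < B := by
  rcases eq_or_ne s 0 with rfl | hs
  · simpa using hB
  have : Nonempty ι := ⟨(Multiset.exists_mem_of_ne_zero hs).choose⟩
  obtain ⟨i, hi, hle⟩ := exists_norm_multiset_sum_le s (f := g)
  exact hle.trans_lt (h i (hi hs))

lemma norm_sum_lt_of_forall_lt {ι : Type*} {t : Finset ι} {g : ι → K} {B : ℝ} (hB : 0 < B)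
    (h : ∀ i ∈ t, ‖g i‖ < B) : ‖∑ i ∈ t, g i‖ < B :=
  norm_multiset_sum_lt_of_forall_lt hB h

lemma norm_add_eq_left_of_norm_lt {x y : K} (h : ‖y‖ < ‖x‖) : ‖x + y‖ = ‖x‖ := by
  rw [norm_add_eq_max_of_norm_ne_norm h.ne', max_eq_left h.le]

end IsUltrametricDist

lemma norm_esymm_le {s : Multiset K} {γ : ℝ} (hγ : 0 ≤ γ) (hs : ∀ c ∈ s, ‖c‖ ≤ γ) (k : ℕ) :
    ‖s.esymm k‖ ≤ γ ^ k :=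
  norm_multiset_sum_le_of_forall_le_of_nonneg (by positivity) fun t ht => by
    obtain ⟨hts, rfl⟩ := Multiset.mem_powersetCard.mp ht
    exact Multiset.norm_prod_le_pow_card fun c hc => hs c (Multiset.mem_of_le hts hc)

lemma norm_prod_sub_pow_card_lt {s : Multiset K} {b : K}
    (hs : ∀ x ∈ s, ‖x - b‖ < ‖b‖) : ‖s.prod - b ^ Multiset.card s‖ < ‖b‖ ^ Multiset.card s := by
  induction s using Multiset.induction with
  | empty => simp
  | cons x t ih =>
    have hx : ‖x - b‖ < ‖b‖ := hs x (Multiset.mem_cons_self x t)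
    have ht := ih fun y hy => hs y (Multiset.mem_cons_of_mem hy)
    have hb : 0 < ‖b‖ := (norm_nonneg _).trans_lt hx
    have hprod : ‖t.prod‖ ≤ ‖b‖ ^ Multiset.card t := by
      simpa using (norm_add_le_max (t.prod - b ^ Multiset.card t) (b ^ Multiset.card t)).trans
        (max_le ht.le (norm_pow b _).le)
    rw [Multiset.prod_cons, Multiset.card_cons, pow_succ', pow_succ',
      show x * t.prod - b * b ^ Multiset.card t
        = (x - b) * t.prod + b * (t.prod - b ^ Multiset.card t) by ring]
    refine (norm_add_le_max _ _).trans_lt (max_lt ?_ ?_) <;> rw [norm_mul]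
    · exact mul_lt_mul_of_lt_of_le_of_nonneg_of_pos hx hprod (norm_nonneg _) (by positivity)
    · exact mul_lt_mul_of_pos_left ht hb

lemma norm_eval_le_one {f : K[X]} (hf : ∀ i, ‖f.coeff i‖ ≤ 1) {z : K} (hz : ‖z‖ ≤ 1) :
    ‖f.eval z‖ ≤ 1 := by
  rw [eval_eq_sum_range]
  refine norm_sum_le_of_forall_le_of_nonneg zero_le_one fun i _ => ?_
  rw [norm_mul, norm_pow]
  exact mul_le_one₀ (hf i) (by positivity) (pow_le_one₀ (norm_nonneg z) hz)

lemma Polynomial.Monic.norm_eval_eq_pow_natDegree {f : K[X]} (hf : f.Monic) {R : ℝ} (hR : 0 ≤ R)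
    (hcoeff : ∀ i < f.natDegree, ‖f.coeff i‖ ≤ R ^ (f.natDegree - i)) {z : K} (hz : R < ‖z‖) :
    ‖f.eval z‖ = ‖z‖ ^ f.natDegree := by
  have hz0 : 0 < ‖z‖ := hR.trans_lt hz
  have hlower : ‖∑ i ∈ Finset.range f.natDegree, f.coeff i * z ^ i‖ < ‖z ^ f.natDegree‖ := by
    refine norm_sum_lt_of_forall_lt (by rw [norm_pow]; positivity) fun i hi => ?_
    rw [Finset.mem_range] at hi
    rw [norm_mul, norm_pow, norm_pow]
    calc ‖f.coeff i‖ * ‖z‖ ^ i ≤ R ^ (f.natDegree - i) * ‖z‖ ^ i := by gcongr; exact hcoeff i hi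
      _ < ‖z‖ ^ (f.natDegree - i) * ‖z‖ ^ i := by gcongr; omega
      _ = ‖z‖ ^ f.natDegree := by rw [← pow_add, Nat.sub_add_cancel hi.le]
  conv_lhs => rw [hf.as_sum]
  simp only [eval_add, eval_pow, eval_X, eval_finsetSum, eval_mul, eval_C]
  rw [norm_add_eq_left_of_norm_lt hlower, norm_pow]

variable {p : ℕ}

lemma norm_natCast_choose_lt_one (hp : p.Prime) (hpK : ‖(p : K)‖ < 1) {k : ℕ} (hk0 : k ≠ 0)
    (hkp : k < p) : ‖(p.choose k : K)‖ < 1 := by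
  obtain ⟨t, ht⟩ := hp.dvd_choose_self hk0 hkp
  rw [ht, Nat.cast_mul, norm_mul]
  exact (mul_le_of_le_one_right (norm_nonneg _) (norm_natCast_le_one K t)).trans_lt hpK

lemma norm_sub_one_lt_one_of_norm_pow_sub_one_lt_one (hp : p.Prime) (hpK : ‖(p : K)‖ < 1)
    {y : K} (hy : ‖y ^ p - 1‖ < 1) : ‖y - 1‖ < 1 := by
  -- If `‖y - 1‖ ≥ 1`, then `(y - 1) ^ p` dominates the binomial expansion of `y ^ p - 1`,
  -- because `p` divides the middle binomial coefficients.
  by_contra! hx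
  obtain ⟨q, rfl⟩ : ∃ q, p = q + 1 := ⟨p - 1, (Nat.sub_add_cancel hp.one_lt.le).symm⟩
  have hexpand : y ^ (q + 1) - 1 = (y - 1) ^ (q + 1) +
      ∑ k ∈ Finset.range q, (y - 1) ^ (k + 1) * ((q + 1).choose (k + 1) : K) := by
    conv_lhs => rw [show y = (y - 1) + 1 by ring, add_pow]
    simp [Finset.sum_range_succ' _ (q + 1), Finset.sum_range_succ _ q]
    ring
  have hmiddle : ‖∑ k ∈ Finset.range q, (y - 1) ^ (k + 1) * ((q + 1).choose (k + 1) : K)‖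
      < ‖(y - 1) ^ (q + 1)‖ := by
    refine norm_sum_lt_of_forall_lt (by rw [norm_pow]; exact pow_pos (zero_lt_one.trans_le hx) _)
      fun k hk => ?_
    rw [Finset.mem_range] at hk
    rw [norm_mul, norm_pow, norm_pow]
    calc ‖y - 1‖ ^ (k + 1) * ‖((q + 1).choose (k + 1) : K)‖
        < ‖y - 1‖ ^ (k + 1) * 1 :=
          mul_lt_mul_of_pos_left (norm_natCast_choose_lt_one hp hpK k.succ_ne_zero (by omega))
            (by positivity)
      _ ≤ ‖y - 1‖ ^ (q + 1) := by rw [mul_one]; exact pow_le_pow_right₀ hx (by omega)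
  rw [hexpand, norm_add_eq_left_of_norm_lt hmiddle, norm_pow] at hy
  exact hy.not_ge (one_le_pow₀ hx)

lemma norm_prod_sub_lt_of_forall_norm_pow_sub_lt (hp : p.Prime) (hpK : ‖(p : K)‖ < 1)
    {t : Multiset K} (ht : Multiset.card t = p) {b : K} (hb : ∀ c ∈ t, ‖c ^ p - b‖ < ‖b‖) :
    ‖t.prod - b‖ < ‖b‖ := by
  obtain ⟨c, hc⟩ := Multiset.card_pos_iff_exists_mem.mp (ht ▸ hp.pos)
  have hb0 : b ≠ 0 := norm_pos_iff.mp ((norm_nonneg _).trans_lt (hb c hc))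
  have hpow : ‖t.prod ^ p - b ^ p‖ < ‖b‖ ^ p := by
    simpa [Multiset.prod_map_pow, ht] using
      norm_prod_sub_pow_card_lt (s := t.map (· ^ p)) (by simpa using hb)
  have hroot : ‖(t.prod / b) ^ p - 1‖ < 1 := by
    rwa [div_pow, div_sub_one (pow_ne_zero p hb0), norm_div, norm_pow,
      div_lt_one (by positivity)]
  have := norm_sub_one_lt_one_of_norm_pow_sub_one_lt_one hp hpK hroot
  rwa [div_sub_one hb0, norm_div, div_lt_one (norm_pos_iff.mpr hb0)] at this

lemma norm_esymm_sub_choose_mul_lt (hp : p.Prime) (hpK : ‖(p : K)‖ < 1) {s : Multiset K}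
    {γ : ℝ} (hγ : 0 < γ) (hs : ∀ c ∈ s, ‖c‖ ≤ γ) {b : K} (hb : ‖b‖ = γ ^ p)
    (hsb : ∀ c ∈ s, ‖c‖ = γ → ‖c ^ p - b‖ < γ ^ p) :
    ‖s.esymm p - (Multiset.card (s.filter (‖·‖ = γ))).choose p * b‖ < γ ^ p := by
  set M := Multiset.powersetCard p s
  set P : Multiset K → Prop := fun t => ∀ c ∈ t, ‖c‖ = γ
  have hcount : Multiset.card (M.filter P) = (Multiset.card (s.filter (‖·‖ = γ))).choose p := by
    rw [Multiset.filter_powersetCard, Multiset.card_powersetCard]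
  have hsplit : s.esymm p - (Multiset.card (M.filter P) : K) * b
      = ((M.filter P).map fun t => t.prod - b).sum
        + ((M.filter (¬ P ·)).map Multiset.prod).sum := by
    rw [Multiset.esymm, show Multiset.powersetCard p s = M.filter P + M.filter (¬ P ·) from
      (Multiset.filter_add_not P M).symm, Multiset.map_add, Multiset.sum_add,
      Multiset.sum_map_sub, Multiset.map_const', Multiset.sum_replicate, nsmul_eq_mul]
    ring
  rw [← hcount, hsplit]
  refine (norm_add_le_max _ _).trans_lt (max_lt ?_ ?_)
  · refine norm_multiset_sum_lt_of_forall_lt (by positivity) fun t ht => ?_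
    obtain ⟨htM, htP⟩ := Multiset.mem_filter.mp ht
    obtain ⟨hts, htp⟩ := Multiset.mem_powersetCard.mp htM
    rw [← hb]
    exact norm_prod_sub_lt_of_forall_norm_pow_sub_lt hp hpK htp fun c hc =>
      hb ▸ hsb c (Multiset.mem_of_le hts hc) (htP c hc)
  · refine norm_multiset_sum_lt_of_forall_lt (by positivity) fun t ht => ?_
    obtain ⟨htM, htP⟩ := Multiset.mem_filter.mp ht
    obtain ⟨hts, rfl⟩ := Multiset.mem_powersetCard.mp htM
    obtain ⟨c, hc, hcγ⟩ := not_forall₂.mp htP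
    exact Multiset.norm_prod_lt_pow_card (fun c hc => hs c (Multiset.mem_of_le hts hc)) hc
      ((hs c (Multiset.mem_of_le hts hc)).lt_of_ne hcγ)

end Ultrametric

section PadicNorm

variable {K : Type*} [NormedField K] {p : ℕ}

lemma isUltrametricDist_of_norm_ratCast_eq_padicNorm (hp : p.Prime)
    (hext : ∀ q : ℚ, ‖(q : K)‖ = padicNorm p q) : IsUltrametricDist K := by
  have := Fact.mk hp
  refine isUltrametricDist_of_forall_norm_natCast_le_one fun n => ?_
  rw [← Rat.cast_natCast, hext]
  exact_mod_cast padicNorm.of_nat n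

lemma charZero_of_norm_ratCast_eq_padicNorm (hp : p.Prime)
    (hext : ∀ q : ℚ, ‖(q : K)‖ = padicNorm p q) : CharZero K := by
  have := Fact.mk hp
  refine charZero_of_inj_zero fun n hn => ?_
  have h := hext n
  rw [Rat.cast_natCast, hn, norm_zero, eq_comm, Rat.cast_eq_zero] at h
  exact_mod_cast padicNorm.zero_of_padicNorm_eq_zero h

lemma norm_intCast_eq_one_of_not_dvd (hp : p.Prime) (hext : ∀ q : ℚ, ‖(q : K)‖ = padicNorm p q)
    {n : ℤ} (hn : ¬ (p : ℤ) ∣ n) : ‖(n : K)‖ = 1 := by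
  have := Fact.mk hp
  rw [← Rat.cast_intCast, hext, (padicNorm.int_eq_one_iff n).mpr hn, Rat.cast_one]

lemma norm_natCast_eq_one_of_not_dvd (hp : p.Prime) (hext : ∀ q : ℚ, ‖(q : K)‖ = padicNorm p q)
    {n : ℕ} (hn : ¬ p ∣ n) : ‖(n : K)‖ = 1 := by
  exact_mod_cast norm_intCast_eq_one_of_not_dvd hp hext (n := n) (by exact_mod_cast hn)

lemma norm_natCast_prime_lt_one (hp : p.Prime) (hext : ∀ q : ℚ, ‖(q : K)‖ = padicNorm p q) :
    ‖(p : K)‖ < 1 := by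
  have := Fact.mk hp
  rw [← Rat.cast_natCast, hext]
  exact_mod_cast padicNorm.padicNorm_p_lt_one_of_prime

lemma two_mul_neg_one_pow_mul_esymm_ne [IsUltrametricDist K] (hp : p.Prime)
    (hext : ∀ q : ℚ, ‖(q : K)‖ = padicNorm p q) {s : Multiset K}
    (hcard : Multiset.card s < 2 * p) {γ : ℝ} (hγ : 0 < γ) (hs : ∀ c ∈ s, ‖c‖ ≤ γ) {a : K}
    (ha : ‖a‖ = γ ^ p) (hclose : ∀ c ∈ s, ‖c‖ = γ → ‖c ^ p + a‖ < γ ^ p) :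
    2 * (-1) ^ p * s.esymm p ≠ a := by
  intro hae
  have hpK := norm_natCast_prime_lt_one hp hext
  have h2 : ‖(2 : K)‖ = 1 := by
    refine le_antisymm (by simpa using norm_natCast_le_one K 2) ?_
    have h2a : ‖a‖ ≤ ‖(2 : K)‖ * γ ^ p := by
      rw [← hae]
      simpa [norm_mul] using
        mul_le_mul_of_nonneg_left (norm_esymm_le hγ.le hs p) (norm_nonneg (2 : K))
    rw [ha] at h2a
    exact le_of_mul_le_mul_right (by rwa [one_mul]) (by positivity)
  have hodd : Odd p := hp.odd_of_ne_two fun hp2 => by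
    subst hp2
    exact hpK.ne (by exact_mod_cast h2)
  set N := (Multiset.card (s.filter (‖·‖ = γ))).choose p
  have happrox : ‖s.esymm p - N * -a‖ < γ ^ p :=
    norm_esymm_sub_choose_mul_lt hp hpK hγ hs (by rw [norm_neg, ha]) fun c hc hcγ => by
      rw [sub_neg_eq_add]; exact hclose c hc hcγ
  have hN : ¬ (p : ℤ) ∣ 1 - 2 * N :=
    Nat.not_dvd_one_sub_two_mul_choose hp
      ((Multiset.card_le_card (Multiset.filter_le _ _)).trans_lt hcard)
  have hkey : ((1 - 2 * N : ℤ) : K) * a = -2 * (s.esymm p - N * -a) := by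
    rw [← hae, hodd.neg_one_pow]
    push_cast
    ring
  have := congrArg norm hkey
  rw [norm_mul, norm_mul, norm_intCast_eq_one_of_not_dvd hp hext hN, one_mul, ha, norm_neg, h2,
    one_mul] at this
  exact (this ▸ happrox).false

end PadicNorm

section DegreeTwoP

variable {K : Type*} [NormedField K] [IsAlgClosed K] [CharZero K] {p : ℕ} {f : K[X]} {γ : ℝ}

lemma coeff_eq_two_mul_esymm_roots_derivative (hp0 : p ≠ 0) (hf : f.Monic)
    (hdeg : f.natDegree = 2 * p) :
    f.coeff p = 2 * (-1) ^ p * f.derivative.roots.esymm p := by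
  have h := natCast_mul_coeff_eq_esymm_roots_derivative hf (IsAlgClosed.splits _) hp0 (by omega)
  rw [hdeg, show 2 * p - p = p by omega] at h
  push_cast at h
  refine mul_left_cancel₀ (Nat.cast_ne_zero.mpr hp0 : (p : K) ≠ 0) ?_
  linear_combination h

variable [IsUltrametricDist K]

lemma norm_coeff_le_norm_prime_mul_pow (hp : p.Prime)
    (hext : ∀ q : ℚ, ‖(q : K)‖ = padicNorm p q) (hf : f.Monic) (hdeg : f.natDegree = 2 * p)
    (hf0 : f.eval 0 = 0) (hγ0 : 0 ≤ γ) (hγ : ∀ c ∈ f.derivative.roots, ‖c‖ ≤ γ) {k : ℕ}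
    (hk : k < 2 * p) (hkp : k ≠ p) : ‖f.coeff k‖ ≤ ‖(p : K)‖ * γ ^ (2 * p - k) := by
  rcases Nat.eq_zero_or_pos k with rfl | hk0
  · rw [coeff_zero_eq_eval_zero, hf0, norm_zero]; positivity
  have hvieta :=
    natCast_mul_coeff_eq_esymm_roots_derivative hf (IsAlgClosed.splits _) hk0.ne' (by omega)
  have hk1 : ‖(k : K)‖ = 1 := norm_natCast_eq_one_of_not_dvd hp hext fun hdvd =>
    hkp (Nat.eq_of_dvd_of_lt_two_mul hk0.ne' hdvd hk)
  calc ‖f.coeff k‖ = ‖(2 : K)‖ * ‖(p : K)‖ * ‖f.derivative.roots.esymm (2 * p - k)‖ := by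
        simpa [hk1, hdeg, norm_mul] using congrArg norm hvieta
    _ ≤ 1 * ‖(p : K)‖ * γ ^ (2 * p - k) := by
        gcongr
        · simpa using norm_natCast_le_one K 2
        · exact norm_esymm_le hγ0 hγ _
    _ = ‖(p : K)‖ * γ ^ (2 * p - k) := by rw [one_mul]

lemma norm_coeff_le_pow (hp : p.Prime)
    (hext : ∀ q : ℚ, ‖(q : K)‖ = padicNorm p q) (hf : f.Monic) (hdeg : f.natDegree = 2 * p)
    (hf0 : f.eval 0 = 0) (hγ0 : 0 ≤ γ) (hγ : ∀ c ∈ f.derivative.roots, ‖c‖ ≤ γ) {k : ℕ}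
    (hk : k < 2 * p) : ‖f.coeff k‖ ≤ γ ^ (2 * p - k) := by
  rcases eq_or_ne k p with rfl | hkp
  · rw [coeff_eq_two_mul_esymm_roots_derivative hp.ne_zero hf hdeg, show 2 * k - k = k by omega]
    simpa [norm_mul] using mul_le_mul (by simpa using norm_natCast_le_one K 2)
      (norm_esymm_le hγ0 hγ k) (norm_nonneg _) zero_le_one
  · exact (norm_coeff_le_norm_prime_mul_pow hp hext hf hdeg hf0 hγ0 hγ hk hkp).trans
      (mul_le_of_le_one_left (by positivity) (norm_natCast_prime_lt_one hp hext).le)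

lemma norm_iterate_le_one (hp : p.Prime)
    (hext : ∀ q : ℚ, ‖(q : K)‖ = padicNorm p q) (hf : f.Monic) (hdeg : f.natDegree = 2 * p)
    (hf0 : f.eval 0 = 0) (hcrit : ∀ c ∈ f.derivative.roots, ‖c‖ ≤ 1) {z : K} (hz : ‖z‖ ≤ 1)
    (n : ℕ) : ‖(fun z => f.eval z)^[n] z‖ ≤ 1 := by
  have hcoeff : ∀ i, ‖f.coeff i‖ ≤ 1 := fun i => by
    rcases lt_trichotomy i (2 * p) with hi | rfl | hi
    · simpa using norm_coeff_le_pow hp hext hf hdeg hf0 zero_le_one hcrit hi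
    · rw [← hdeg, hf.coeff_natDegree, norm_one]
    · rw [coeff_eq_zero_of_natDegree_lt (hdeg ▸ hi), norm_zero]; exact zero_le_one
  induction n with
  | zero => exact hz
  | succ n ih => rw [Function.iterate_succ_apply']; exact norm_eval_le_one hcoeff ih

lemma norm_eval_le_of_bounded_orbit (hp : p.Prime)
    (hext : ∀ q : ℚ, ‖(q : K)‖ = padicNorm p q) (hf : f.Monic) (hdeg : f.natDegree = 2 * p)
    (hf0 : f.eval 0 = 0) (hγ1 : 1 ≤ γ) (hγ : ∀ c ∈ f.derivative.roots, ‖c‖ ≤ γ) {c : K}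
    (horb : ∃ B : ℝ, ∀ n : ℕ, ‖(fun z => f.eval z)^[n] c‖ ≤ B) : ‖f.eval c‖ ≤ γ := by
  obtain ⟨B, hB⟩ := horb
  have hescape : ∀ w : K, γ < ‖w‖ → ‖w‖ ^ 2 ≤ ‖f.eval w‖ := fun w hw => by
    rw [hf.norm_eval_eq_pow_natDegree (zero_le_one.trans hγ1)
      (fun i hi => hdeg ▸ norm_coeff_le_pow hp hext hf hdeg hf0 (zero_le_one.trans hγ1) hγ
        (hdeg ▸ hi)) hw, hdeg]
    exact pow_le_pow_right₀ (hγ1.trans hw.le) (by linarith [hp.two_le])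
  exact norm_le_of_bounded_orbit hγ1 hescape (B := B) fun n => by
    simpa only [← Function.iterate_succ_apply] using hB (n + 1)

lemma norm_eval_sub_le (hp : p.Prime)
    (hext : ∀ q : ℚ, ‖(q : K)‖ = padicNorm p q) (hf : f.Monic) (hdeg : f.natDegree = 2 * p)
    (hf0 : f.eval 0 = 0) (hγ0 : 0 ≤ γ) (hγ : ∀ c ∈ f.derivative.roots, ‖c‖ ≤ γ) {z : K}
    (hz : ‖z‖ ≤ γ) :
    ‖f.eval z - (z ^ (2 * p) + f.coeff p * z ^ p)‖ ≤ ‖(p : K)‖ * γ ^ (2 * p) := by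
  have hsplit : f.eval z - (z ^ (2 * p) + f.coeff p * z ^ p)
      = ∑ i ∈ (Finset.range (2 * p)).erase p, f.coeff i * z ^ i := by
    have h := congrArg (eval z) hf.as_sum
    simp only [eval_add, eval_pow, eval_X, eval_finsetSum, eval_mul, eval_C, hdeg] at h
    rw [h, ← Finset.add_sum_erase _ _ (Finset.mem_range.mpr (by linarith [hp.pos]))]
    ring
  rw [hsplit]
  refine norm_sum_le_of_forall_le_of_nonneg (by positivity) fun i hi => ?_
  obtain ⟨hip, hi⟩ := Finset.mem_erase.mp hi
  rw [Finset.mem_range] at hi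
  rw [norm_mul, norm_pow]
  calc ‖f.coeff i‖ * ‖z‖ ^ i ≤ (‖(p : K)‖ * γ ^ (2 * p - i)) * γ ^ i := by
        gcongr
        exact norm_coeff_le_norm_prime_mul_pow hp hext hf hdeg hf0 hγ0 hγ hi hip
    _ = ‖(p : K)‖ * γ ^ (2 * p) := by rw [mul_assoc, ← pow_add, Nat.sub_add_cancel hi.le]

lemma norm_pow_add_coeff_lt (hp : p.Prime)
    (hext : ∀ q : ℚ, ‖(q : K)‖ = padicNorm p q) (hf : f.Monic) (hdeg : f.natDegree = 2 * p)
    (hf0 : f.eval 0 = 0) (hγ1 : 1 < γ) (hγ : ∀ c ∈ f.derivative.roots, ‖c‖ ≤ γ) {c : K}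
    (hc : ‖c‖ = γ) (hfc : ‖f.eval c‖ ≤ γ) : ‖c ^ p + f.coeff p‖ < γ ^ p := by
  have hγ0 : 0 < γ := zero_lt_one.trans hγ1
  have hrest := norm_eval_sub_le hp hext hf hdeg hf0 hγ0.le hγ hc.le
  have hprod : ‖c ^ p * (c ^ p + f.coeff p)‖ < γ ^ p * γ ^ p := by
    rw [← pow_add, ← two_mul, show c ^ p * (c ^ p + f.coeff p)
      = f.eval c + ((c ^ (2 * p) + f.coeff p * c ^ p) - f.eval c) by ring]
    refine (norm_add_le_max _ _).trans_lt (max_lt ?_ ?_)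
    · exact hfc.trans_lt
        (by simpa using pow_lt_pow_right₀ hγ1 (by linarith [hp.two_le] : 1 < 2 * p))
    · rw [norm_sub_rev]
      exact hrest.trans_lt
        (mul_lt_of_lt_one_left (by positivity) (norm_natCast_prime_lt_one hp hext))
  rw [norm_mul, norm_pow, hc] at hprod
  exact lt_of_mul_lt_mul_left hprod (by positivity)

theorem norm_roots_derivative_le_one_of_bounded_orbits (hp : p.Prime)
    (hext : ∀ q : ℚ, ‖(q : K)‖ = padicNorm p q) (hf : f.Monic) (hdeg : f.natDegree = 2 * p)
    (hf0 : f.eval 0 = 0)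
    (horb : ∀ c ∈ f.derivative.roots, ∃ B : ℝ, ∀ n : ℕ, ‖(fun z => f.eval z)^[n] c‖ ≤ B) :
    ∀ c ∈ f.derivative.roots, ‖c‖ ≤ 1 := by
  by_contra! hbig
  obtain ⟨c₀, hc₀, hc₀1⟩ := hbig
  obtain ⟨cm, hcm, hmax⟩ := Multiset.exists_max_image (‖·‖) (s := f.derivative.roots)
    (by rintro h; simp [h] at hc₀)
  have hγ1 : 1 < ‖cm‖ := hc₀1.trans_le (hmax c₀ hc₀)
  have hclose : ∀ c ∈ f.derivative.roots, ‖c‖ = ‖cm‖ → ‖c ^ p + f.coeff p‖ < ‖cm‖ ^ p :=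
    fun c hc hcγ => norm_pow_add_coeff_lt hp hext hf hdeg hf0 hγ1 hmax hcγ
      (norm_eval_le_of_bounded_orbit hp hext hf hdeg hf0 hγ1.le hmax (horb c hc))
  have ha : ‖f.coeff p‖ = ‖cm‖ ^ p := by
    have h := hclose cm hcm rfl
    rw [← norm_pow] at h ⊢
    exact (norm_eq_of_add_norm_lt_max (h.trans_le (le_max_left _ _))).symm
  refine two_mul_neg_one_pow_mul_esymm_ne hp hext ?_ (zero_lt_one.trans hγ1) hmax ha hclose
    (coeff_eq_two_mul_esymm_roots_derivative hp.ne_zero hf hdeg).symm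
  rw [IsAlgClosed.card_roots_eq_natDegree, natDegree_derivative, hdeg]
  have := hp.pos
  omega

end DegreeTwoP

theorem stmt_2_general (K : Type*) [NormedField K] [IsAlgClosed K]
    (p : ℕ) (hp : p.Prime)
    (hext : ∀ q : ℚ, ‖(q : K)‖ = (padicNorm p q : ℝ))
    (f : K[X]) (hmonic : f.Monic) (hdeg : f.natDegree = 2 * p) (hf0 : f.eval 0 = 0) :
    (∀ c : K, f.derivative.eval c = 0 →
      ∃ B : ℝ, ∀ n : ℕ, ‖(fun z => f.eval z)^[n] c‖ ≤ B) ↔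
    (∀ c : K, f.derivative.eval c = 0 → ‖c‖ ≤ 1) := by
  have := isUltrametricDist_of_norm_ratCast_eq_padicNorm hp hext
  have := charZero_of_norm_ratCast_eq_padicNorm hp hext
  have hcrit : ∀ c, f.derivative.eval c = 0 ↔ c ∈ f.derivative.roots := fun c =>
    (mem_roots (derivative_ne_zero.mpr (by rw [hdeg]; exact (Nat.mul_pos two_pos hp.pos).ne'))).symm
  simp only [hcrit]
  exact ⟨norm_roots_derivative_le_one_of_bounded_orbits hp hext hmonic hdeg hf0,
    fun h c hc => ⟨1, norm_iterate_le_one hp hext hmonic hdeg hf0 h (h c hc)⟩⟩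

/-- Let `p` be a prime and `d = 2p`. A polynomial `f ∈ P_d` is
post-critically bounded iff every critical point `c` of `f` satisfies `|c| ≤ 1`. -/
theorem stmt_2 (K : Type*) [NormedField K] [IsAlgClosed K] [CompleteSpace K]
    (hna : IsNonarchimedean (fun x : K => ‖x‖))
    (p : ℕ) (hp : p.Prime)
    (hext : ∀ q : ℚ, ‖(q : K)‖ = (padicNorm p q : ℝ))
    (f : K[X]) (hmonic : f.Monic) (hdeg : f.natDegree = 2 * p) (hf0 : f.eval 0 = 0) :
    (∀ c : K, f.derivative.eval c = 0 →
      ∃ B : ℝ, ∀ n : ℕ, ‖(fun z => f.eval z)^[n] c‖ ≤ B) ↔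
    (∀ c : K, f.derivative.eval c = 0 → ‖c‖ ≤ 1) :=
  stmt_2_general K p hp hext f hmonic hdeg hf0
end

section
/- Let p be a prime, d = p^k with k ≥ 1, and f ∈ P_d. Let c be a critical point of f of maximal absolute value among all critical points, and suppose |c| > 1. Then every root z of f satisfies |z| < |c|; consequently |fⁿ(c)| = |c|^{dⁿ} for all n ≥ 1, so the forward orbit of c under f is unbounded. -/
/-!
Write `f = ∑ aᵢ zⁱ`. By Vieta, the coefficients of `f' = d ∏ (z - cⱼ)` satisfy
`|i aᵢ| ≤ |d| |c|^(d-i)`, and since `d = p^k` is strictly more divisible by `p` than any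
`0 < i < d`, this gives `|aᵢ| < |c|^(d-i)` for all `i < d` (`a₀ = 0`). So on `|x| ≥ |c|` the
leading term dominates: `|f(x)| = |x|^d`. Hence `f` has no root there, and the orbit of `c`
never leaves that region, its norm being raised to the `d`-th power at each step.
-/

open Polynomial

section Ultrametric

variable {K : Type*} [NormedField K] [IsUltrametricDist K]

lemma Multiset.norm_esymm_le {s : Multiset K} {R : ℝ} (hR : 0 ≤ R) (hs : ∀ x ∈ s, ‖x‖ ≤ R)
    (n : ℕ) : ‖s.esymm n‖ ≤ R ^ n := by
  obtain ⟨t, ht, hsum⟩ :=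
    IsUltrametricDist.exists_norm_multiset_sum_le (s.powersetCard n) (f := Multiset.prod)
  rcases eq_or_ne (s.powersetCard n) 0 with h0 | hne
  · simp [Multiset.esymm, h0, pow_nonneg hR]
  obtain ⟨hts, rfl⟩ := Multiset.mem_powersetCard.mp (ht hne)
  calc ‖s.esymm t.card‖ ≤ ‖t.prod‖ := hsum
    _ = (t.map normHom).prod := map_multiset_prod normHom t
    _ ≤ R ^ t.card := Multiset.prod_map_le_pow_card (fun x _ => norm_nonneg x)
      fun x hx => hs x (Multiset.mem_of_le hts hx)

lemma Polynomial.norm_coeff_le_of_forall_mem_roots_norm_le {g : K[X]}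
    (hsplit : Multiset.card g.roots = g.natDegree) {R : ℝ} (hR : 0 ≤ R)
    (hroots : ∀ x ∈ g.roots, ‖x‖ ≤ R) {j : ℕ} (hj : j ≤ g.natDegree) :
    ‖g.coeff j‖ ≤ ‖g.leadingCoeff‖ * R ^ (g.natDegree - j) := by
  rw [coeff_eq_esymm_roots_of_card hsplit hj, norm_mul, norm_mul, norm_pow, norm_neg, norm_one,
    one_pow, mul_one]
  exact mul_le_mul_of_nonneg_left (Multiset.norm_esymm_le hR hroots _) (norm_nonneg _)

lemma Polynomial.Monic.norm_eval_eq_of_norm_coeff_lt {f : K[X]} (hf : f.Monic) {R : ℝ}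
    (hR : 0 < R) (hcoeff : ∀ i < f.natDegree, ‖f.coeff i‖ < R ^ (f.natDegree - i)) {x : K}
    (hx : R ≤ ‖x‖) : ‖f.eval x‖ = ‖x‖ ^ f.natDegree := by
  set d := f.natDegree
  have hx0 : 0 < ‖x‖ := hR.trans_le hx
  have hlower : ‖∑ i ∈ Finset.range d, f.coeff i * x ^ i‖ < ‖x ^ d‖ := by
    rw [norm_pow]
    rcases (Finset.range d).eq_empty_or_nonempty with h | h
    · simp [h, pow_pos hx0]
    obtain ⟨i, hi, hle⟩ := IsUltrametricDist.exists_norm_finsetSum_le_of_nonempty h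
      (fun i => f.coeff i * x ^ i)
    have hid := Finset.mem_range.mp hi
    calc _ ≤ ‖f.coeff i * x ^ i‖ := hle
      _ = ‖f.coeff i‖ * ‖x‖ ^ i := by rw [norm_mul, norm_pow]
      _ < ‖x‖ ^ (d - i) * ‖x‖ ^ i := by
        gcongr
        exact (hcoeff i hid).trans_le (pow_le_pow_left₀ hR.le hx _)
      _ = ‖x‖ ^ d := by rw [← pow_add, Nat.sub_add_cancel hid.le]
  rw [hf.as_sum]
  simp only [eval_add, eval_pow, eval_X, eval_finsetSum, eval_mul, eval_C]
  rw [IsUltrametricDist.norm_add_eq_max_of_norm_ne_norm hlower.ne', max_eq_left hlower.le,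
    norm_pow]

lemma Polynomial.Monic.norm_lt_of_isRoot {f : K[X]} (hf : f.Monic) {R : ℝ}
    (hR : 0 < R) (hcoeff : ∀ i < f.natDegree, ‖f.coeff i‖ < R ^ (f.natDegree - i)) {z : K}
    (hz : f.IsRoot z) : ‖z‖ < R := by
  by_contra! h
  have := hf.norm_eval_eq_of_norm_coeff_lt hR hcoeff h
  rw [hz.eq_zero, norm_zero] at this
  exact (pow_pos (hR.trans_le h) _).ne this

lemma Polynomial.Monic.norm_coeff_lt_of_norm_natDegree_lt [CharZero K] [IsAlgClosed K]
    {f : K[X]} (hf : f.Monic) (hf0 : f.coeff 0 = 0) {R : ℝ} (hR : 0 < R)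
    (hcrit : ∀ x, f.derivative.IsRoot x → ‖x‖ ≤ R)
    (hdeg : ∀ i, 0 < i → i < f.natDegree → ‖(f.natDegree : K)‖ < ‖(i : K)‖) :
    ∀ i < f.natDegree, ‖f.coeff i‖ < R ^ (f.natDegree - i) := by
  rintro (_ | j) hj
  · simpa [hf0] using pow_pos hR _
  have hvieta := norm_coeff_le_of_forall_mem_roots_norm_le (g := f.derivative)
    IsAlgClosed.card_roots_eq_natDegree hR.le (fun x hx => hcrit x (mem_roots'.mp hx).2)
    (j := j) (by rw [natDegree_derivative]; omega)
  rw [coeff_derivative, leadingCoeff_derivative, natDegree_derivative, hf.leadingCoeff, one_mul,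
    norm_mul, Nat.sub_sub, add_comm 1 j] at hvieta
  have hsmall := hdeg (j + 1) j.succ_pos hj
  push_cast at hsmall
  refine lt_of_mul_lt_mul_right (hvieta.trans_lt ?_) (norm_nonneg _)
  rw [mul_comm _ ‖_ + 1‖]
  exact mul_lt_mul_of_pos_right hsmall (pow_pos hR _)

end Ultrametric

lemma padicNorm_prime_pow_lt {p : ℕ} [Fact p.Prime] {k i : ℕ} (hi0 : i ≠ 0) (hi : i < p ^ k) :
    padicNorm p ((p ^ k : ℕ) : ℚ) < padicNorm p (i : ℚ) := by
  have hv : padicValNat p i < k := by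
    by_contra! h
    exact hi.not_ge (Nat.le_of_dvd (Nat.pos_of_ne_zero hi0) ((padicValNat_dvd_iff_le hi0).mpr h))
  have hp := (Fact.out : p.Prime)
  rw [padicNorm.eq_zpow_of_nonzero (by exact_mod_cast (pow_pos hp.pos k).ne'),
    padicNorm.eq_zpow_of_nonzero (by exact_mod_cast hi0),
    padicValRat.of_nat, padicValRat.of_nat, padicValNat.prime_pow]
  exact zpow_lt_zpow_right₀ (by exact_mod_cast hp.one_lt) (by omega)

lemma norm_iterate_eq_pow_pow {E : Type*} [Norm E] {g : E → E} {d : ℕ} (hd : d ≠ 0) {R : ℝ}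
    (hg : ∀ x, R ≤ ‖x‖ → ‖g x‖ = ‖x‖ ^ d) {c : E} (hR : R ≤ ‖c‖) (hc : 1 ≤ ‖c‖) (n : ℕ) :
    ‖g^[n] c‖ = ‖c‖ ^ d ^ n := by
  induction n with
  | zero => simp
  | succ n ih =>
    have hRn : R ≤ ‖g^[n] c‖ := ih ▸ hR.trans (le_self_pow₀ hc (pow_ne_zero n hd))
    rw [Function.iterate_succ_apply', hg _ hRn, ih, ← pow_mul, ← pow_succ]

lemma not_exists_forall_pow_pow_le {a : ℝ} (ha : 1 < a) {d : ℕ} (hd : 1 < d) :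
    ¬ ∃ B : ℝ, ∀ n : ℕ, a ^ d ^ n ≤ B := by
  rintro ⟨B, hB⟩
  obtain ⟨n, hn⟩ := pow_unbounded_of_one_lt B ha
  exact (hn.trans_le (pow_le_pow_right₀ ha.le (Nat.lt_pow_self hd).le)).not_ge (hB n)

theorem stmt_9_general (K : Type*) [NormedField K] [IsAlgClosed K]
    (hna : IsNonarchimedean (fun x : K => ‖x‖))
    (p : ℕ) (hp : p.Prime)
    (hext : ∀ q : ℚ, ‖(q : K)‖ = (padicNorm p q : ℝ))
    (k : ℕ) (hk : 1 ≤ k) (d : ℕ) (hd : d = p ^ k)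
    (f : K[X]) (hmonic : f.Monic) (hdeg : f.natDegree = d) (hf0 : f.eval 0 = 0)
    (c : K)
    (hmax : ∀ c' : K, f.derivative.eval c' = 0 → ‖c'‖ ≤ ‖c‖)
    (hbig : 1 < ‖c‖) :
    (∀ z : K, f.eval z = 0 → ‖z‖ < ‖c‖) ∧
    (∀ n : ℕ, 1 ≤ n → ‖(fun z => f.eval z)^[n] c‖ = ‖c‖ ^ (d ^ n)) ∧
    ¬ ∃ B : ℝ, ∀ n : ℕ, ‖(fun z => f.eval z)^[n] c‖ ≤ B := by
  have : Fact p.Prime := ⟨hp⟩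
  have : IsUltrametricDist K := .isUltrametricDist_of_isNonarchimedean_norm hna
  have hnat (n : ℕ) : ‖(n : K)‖ = padicNorm p n := by simpa using hext n
  have : CharZero K := charZero_of_inj_zero fun n hn => by
    have : (padicNorm p n : ℝ) = 0 := by rw [← hnat, hn, norm_zero]
    exact_mod_cast padicNorm.zero_of_padicNorm_eq_zero (p := p) (q := n) (by exact_mod_cast this)
  have hc0 : 0 < ‖c‖ := one_pos.trans hbig
  have hcoeff : ∀ i < f.natDegree, ‖f.coeff i‖ < ‖c‖ ^ (f.natDegree - i) :=
    hmonic.norm_coeff_lt_of_norm_natDegree_lt (by rw [coeff_zero_eq_eval_zero, hf0]) hc0 hmax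
      fun i hi0 hi => by
        rw [hnat, hnat, hdeg, hd]
        exact_mod_cast padicNorm_prime_pow_lt hi0.ne' (by rwa [hdeg, hd] at hi)
  have hd1 : 1 < d := hd ▸ Nat.one_lt_pow (by omega) hp.one_lt
  have hiter := norm_iterate_eq_pow_pow (by omega) (fun x hx => hdeg ▸
    hmonic.norm_eval_eq_of_norm_coeff_lt hc0 hcoeff hx) le_rfl hbig.le
  refine ⟨fun z hz => hmonic.norm_lt_of_isRoot hc0 hcoeff hz, fun n _ => hiter n, ?_⟩
  simpa only [hiter] using not_exists_forall_pow_pow_le hbig hd1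

/-- Let `p` be a prime, `d = p^k` with `k ≥ 1`, and `f ∈ P_d`. Let `c`
be a critical point of `f` of maximal absolute value and suppose `|c| > 1`. Then
every root `z` of `f` satisfies `|z| < |c|`; consequently `|fⁿ(c)| = |c|^(dⁿ)` for
all `n ≥ 1`, so the forward orbit of `c` is unbounded. -/
theorem stmt_9 (K : Type*) [NormedField K] [IsAlgClosed K] [CompleteSpace K]
    (hna : IsNonarchimedean (fun x : K => ‖x‖))
    (p : ℕ) (hp : p.Prime)
    (hext : ∀ q : ℚ, ‖(q : K)‖ = (padicNorm p q : ℝ))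
    (k : ℕ) (hk : 1 ≤ k) (d : ℕ) (hd : d = p ^ k)
    (f : K[X]) (hmonic : f.Monic) (hdeg : f.natDegree = d) (hf0 : f.eval 0 = 0)
    (c : K) (hc : f.derivative.eval c = 0)
    (hmax : ∀ c' : K, f.derivative.eval c' = 0 → ‖c'‖ ≤ ‖c‖)
    (hbig : 1 < ‖c‖) :
    (∀ z : K, f.eval z = 0 → ‖z‖ < ‖c‖) ∧
    (∀ n : ℕ, 1 ≤ n → ‖(fun z => f.eval z)^[n] c‖ = ‖c‖ ^ (d ^ n)) ∧
    ¬ ∃ B : ℝ, ∀ n : ℕ, ‖(fun z => f.eval z)^[n] c‖ ≤ B :=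
  stmt_9_general K hna p hp hext k hk d hd f hmonic hdeg hf0 c hmax hbig
end
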